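/- Let b = 2. For a positive integer a with a > b+1 = 3, the inequality Δ_{a,2}(1) ≥ 0, i.e. p(a−1)·p(3) ≥ p(a)·p(2), holds if and only if a = 5 or a ≥ 7. -/
import Mathlib

open Multiset Finset

def p (n : ℕ) : ℕ := Fintype.card (Nat.Partition n)

def q (m n : ℕ) : ℕ := Fintype.card {c : n.Partition // ∀ i ∈ c.parts, m ≤ i}

lemma p_eq (n : ℕ) : p n = q 1 n := by
  refine (Fintype.card_congr (Equiv.subtypeUnivEquiv ?_)).symm
  exact fun c i hi => c.parts_pos hi

lemma parts_card_le (m n : ℕ) (hm : 1 ≤ m) (hn : n < 2 * m) (c : n.Partition)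
    (hc : ∀ i ∈ c.parts, m ≤ i) : c.parts = if n = 0 then 0 else {n} := by
  have hs := c.parts_sum
  rcases Multiset.empty_or_exists_mem c.parts with h0 | ⟨a, ha⟩
  · rw [h0] at hs
    simp at hs
    simp [h0, ← hs]
  · obtain ⟨t, ht⟩ := Multiset.exists_cons_of_mem ha
    rcases Multiset.empty_or_exists_mem t with h1 | ⟨b, hb⟩
    · rw [ht, h1] at hs
      simp at hs
      have : n ≠ 0 := by
        have := c.parts_pos ha; omega
      rw [ht, h1, if_neg this, hs]
      rfl
    · exfalso
      have hat : m ≤ a := hc a ha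
      have hbt : m ≤ b := hc b (by rw [ht]; exact Multiset.mem_cons_of_mem hb)
      have hble : b ≤ t.sum := Multiset.single_le_sum (fun x _ => Nat.zero_le x) b hb
      rw [ht] at hs
      rw [Multiset.sum_cons] at hs
      omega

lemma E0 (m : ℕ) : q m 0 = 1 := by
  rw [q, Fintype.card_eq_one_iff]
  have hz : ∀ c : Nat.Partition 0, c.parts = 0 := by
    intro c
    rcases Multiset.empty_or_exists_mem c.parts with h0 | ⟨a, ha⟩
    · exact h0
    · have h1 : 0 < a := c.parts_pos ha
      have h2 : a ≤ c.parts.sum := Multiset.single_le_sum (fun x _ => Nat.zero_le x) a ha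
      rw [c.parts_sum] at h2
      omega
  refine ⟨⟨⟨0, by simp, by simp⟩, by simp⟩, ?_⟩
  rintro ⟨c, hc⟩
  exact Subtype.ext (Nat.Partition.ext (hz c))

lemma E1 (m n : ℕ) (h0 : 0 < n) (h1 : n < m) : q m n = 0 := by
  rw [q, Fintype.card_eq_zero_iff]
  constructor
  rintro ⟨c, hc⟩
  rcases Multiset.empty_or_exists_mem c.parts with he | ⟨a, ha⟩
  · have := c.parts_sum
    rw [he] at this
    simp at this
    omega
  · have h2 : a ≤ c.parts.sum := Multiset.single_le_sum (fun x _ => Nat.zero_le x) a ha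
    have h3 : m ≤ a := hc a ha
    rw [c.parts_sum] at h2
    omega

lemma q_pos (m n : ℕ) (hm : 1 ≤ m) (hmn : m ≤ n) : 1 ≤ q m n := by
  rw [q, Nat.succ_le_iff, Fintype.card_pos_iff]
  refine ⟨⟨⟨{n}, ?_, ?_⟩, ?_⟩⟩
  · intro i hi
    rw [Multiset.mem_singleton] at hi
    omega
  · simp
  · intro i hi
    rw [Multiset.mem_singleton] at hi
    omega

lemma q_le_one (m n : ℕ) (hm : 1 ≤ m) (hn : n < 2 * m) : q m n ≤ 1 := by
  rw [q, Fintype.card_le_one_iff]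
  rintro ⟨c, hc⟩ ⟨d, hd⟩
  refine Subtype.ext (Nat.Partition.ext ?_)
  rw [parts_card_le m n hm hn c hc, parts_card_le m n hm hn d hd]

lemma R (m n : ℕ) (hm : 1 ≤ m) (hmn : m ≤ n) :
    q m n = q m (n - m) + q (m + 1) n := by
  classical
  have hsplit : q m n =
      Fintype.card {c : n.Partition // (∀ i ∈ c.parts, m ≤ i) ∧ m ∈ c.parts}
      + Fintype.card {c : n.Partition // (∀ i ∈ c.parts, m ≤ i) ∧ m ∉ c.parts} := by
    rw [q, Fintype.card_subtype, Fintype.card_subtype, Fintype.card_subtype,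
      ← Finset.filter_filter, ← Finset.filter_filter,
      Finset.card_filter_add_card_filter_not]
  have hA : {c : n.Partition // (∀ i ∈ c.parts, m ≤ i) ∧ m ∈ c.parts}
      ≃ {c : (n - m).Partition // ∀ i ∈ c.parts, m ≤ i} := by
    refine
      { toFun := fun c => ⟨⟨c.1.parts.erase m, ?_, ?_⟩, ?_⟩
        invFun := fun d => ⟨⟨m ::ₘ d.1.parts, ?_, ?_⟩, ?_, ?_⟩
        left_inv := ?_
        right_inv := ?_ }
    · intro i hi
      exact c.1.parts_pos (Multiset.mem_of_mem_erase hi)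
    · have hce := Multiset.cons_erase c.2.2
      have : c.1.parts.sum = n := c.1.parts_sum
      rw [← hce, Multiset.sum_cons] at this
      omega
    · intro i hi
      exact c.2.1 i (Multiset.mem_of_mem_erase hi)
    · intro i hi
      rcases Multiset.mem_cons.1 hi with h | h
      · omega
      · exact d.1.parts_pos h
    · rw [Multiset.sum_cons, d.1.parts_sum]
      omega
    · intro i hi
      rcases Multiset.mem_cons.1 hi with h | h
      · omega
      · exact d.2 i h
    · exact Multiset.mem_cons_self m _
    · rintro ⟨c, hc⟩
      exact Subtype.ext (Nat.Partition.ext (Multiset.cons_erase hc.2))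
    · rintro ⟨d, hd⟩
      exact Subtype.ext (Nat.Partition.ext (Multiset.erase_cons_head m d.parts))
  have hB : {c : n.Partition // (∀ i ∈ c.parts, m ≤ i) ∧ m ∉ c.parts}
      ≃ {c : n.Partition // ∀ i ∈ c.parts, m + 1 ≤ i} := by
    refine Equiv.subtypeEquivRight fun c => ⟨fun h i hi => ?_, fun h => ⟨fun i hi => ?_, fun hm' => ?_⟩⟩
    · have h1 := h.1 i hi
      have h2 : i ≠ m := fun he => h.2 (he ▸ hi)
      omega
    · have := h i hi; omega
    · have := h m hm'; omega
  rw [hsplit, Fintype.card_congr hA, Fintype.card_congr hB]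
  rfl

attribute [irreducible] q

lemma qcong (m : ℕ) {a b : ℕ} (h : a = b) : q m a = q m b := by rw [h]

lemma Hmain (n m : ℕ) (hm : 2 ≤ m) (hn : m + 2 ≤ n) :
    2 * q (m + 1) n ≤ ∑ j ∈ Finset.range m, q m (n - 1 - j) := by
  by_cases hbig : 2 * m + 3 ≤ n
  · -- step case
    have hS : ∑ j ∈ Finset.range m, q m (n - 1 - j) =
        (∑ j ∈ Finset.range m, q m (n - m - 1 - j))
          + ∑ j ∈ Finset.range m, q (m + 1) (n - 1 - j) := by
      rw [← Finset.sum_add_distrib]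
      refine Finset.sum_congr rfl fun j hj => ?_
      rw [Finset.mem_range] at hj
      rw [R m (n - 1 - j) (by omega) (by omega), qcong m (show n - 1 - j - m = n - m - 1 - j by omega)]
    have hA : (∑ j ∈ Finset.range m, q m (n - m - 1 - j)) =
        q m (n - m - 1) + ∑ j ∈ Finset.range (m - 1), q m (n - m - 2 - j) := by
      obtain ⟨k, rfl⟩ : ∃ k, m = k + 1 := ⟨m - 1, by omega⟩
      rw [Finset.sum_range_succ', add_comm]
      have h1 : q (k + 1) (n - (k + 1) - 1 - 0) = q (k + 1) (n - (k + 1) - 1) :=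
        qcong _ (by omega)
      have h2 : ∑ j ∈ Finset.range k, q (k + 1) (n - (k + 1) - 1 - (j + 1)) =
          ∑ j ∈ Finset.range (k + 1 - 1), q (k + 1) (n - (k + 1) - 2 - j) := by
        rw [Nat.add_sub_cancel]
        exact Finset.sum_congr rfl fun j hj => qcong _ (by omega)
      rw [h1, h2]
    have ih1 : 2 * q (m + 1) (n - m - 1) ≤
        ∑ j ∈ Finset.range m, q m ((n - m - 1) - 1 - j) :=
      Hmain (n - m - 1) m hm (by omega)
    have hB : ∑ j ∈ Finset.range m, q m ((n - m - 1) - 1 - j) =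
        (∑ j ∈ Finset.range (m - 1), q m (n - m - 2 - j)) + q m (n - 2 * m - 1) := by
      obtain ⟨k, rfl⟩ : ∃ k, m = k + 1 := ⟨m - 1, by omega⟩
      rw [Finset.sum_range_succ]
      have h1 : q (k + 1) (n - (k + 1) - 1 - 1 - k) = q (k + 1) (n - 2 * (k + 1) - 1) :=
        qcong _ (by omega)
      have h2 : ∑ j ∈ Finset.range k, q (k + 1) (n - (k + 1) - 1 - 1 - j) =
          ∑ j ∈ Finset.range (k + 1 - 1), q (k + 1) (n - (k + 1) - 2 - j) := by
        rw [Nat.add_sub_cancel]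
        exact Finset.sum_congr rfl fun j hj => qcong _ (by omega)
      rw [h1, h2]
    have hR1 : q m (n - m - 1) = q m (n - 2 * m - 1) + q (m + 1) (n - m - 1) := by
      rw [R m (n - m - 1) (by omega) (by omega),
        qcong m (show n - m - 1 - m = n - 2 * m - 1 by omega)]
    have ih2 : 2 * q (m + 1 + 1) n ≤ ∑ j ∈ Finset.range (m + 1), q (m + 1) (n - 1 - j) :=
      Hmain n (m + 1) (by omega) (by omega)
    have hT : ∑ j ∈ Finset.range (m + 1), q (m + 1) (n - 1 - j) =
        (∑ j ∈ Finset.range m, q (m + 1) (n - 1 - j)) + q (m + 1) (n - m - 1) := by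
      rw [Finset.sum_range_succ, qcong (m + 1) (show n - 1 - m = n - m - 1 by omega)]
    have hL : q (m + 1) n = q (m + 1) (n - m - 1) + q (m + 1 + 1) n := by
      rw [R (m + 1) n (by omega) (by omega),
        qcong (m + 1) (show n - (m + 1) = n - m - 1 by omega)]
    omega
  · -- base case
    push_neg at hbig
    have hsum2 : q m (n - 1) + q m (n - 2) ≤ ∑ j ∈ Finset.range m, q m (n - 1 - j) := by
      have h2 : ∑ j ∈ Finset.range 2, q m (n - 1 - j) ≤ ∑ j ∈ Finset.range m, q m (n - 1 - j) := by
        refine Finset.sum_le_sum_of_subset ?_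
        intro x hx
        rw [Finset.mem_range] at *
        omega
      rw [Finset.sum_range_succ, Finset.sum_range_succ, Finset.sum_range_zero,
        qcong m (show n - 1 - 0 = n - 1 by omega),
        qcong m (show n - 1 - 1 = n - 2 by omega)] at h2
      omega
    by_cases hn2 : n ≤ 2 * m + 1
    · have h1 : q (m + 1) n ≤ 1 := q_le_one (m + 1) n (by omega) (by omega)
      have h2 : 1 ≤ q m (n - 1) := q_pos m (n - 1) (by omega) (by omega)
      have h3 : 1 ≤ q m (n - 2) := q_pos m (n - 2) (by omega) (by omega)
      omega
    · have hn3 : n = 2 * m + 2 := by omega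
      have h1 : q (m + 1) n ≤ 2 := by
        rw [R (m + 1) n (by omega) (by omega)]
        have a1 : q (m + 1) (n - (m + 1)) ≤ 1 :=
          q_le_one (m + 1) (n - (m + 1)) (by omega) (by omega)
        have a2 : q (m + 1 + 1) n ≤ 1 := q_le_one (m + 1 + 1) n (by omega) (by omega)
        omega
      have h2 : 2 ≤ q m (n - 1) := by
        rw [R m (n - 1) (by omega) (by omega)]
        have a1 : 1 ≤ q (m + 1) (n - 1) := q_pos (m + 1) (n - 1) (by omega) (by omega)
        have a2 : 1 ≤ q m (n - 1 - m) := by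
          rw [R m (n - 1 - m) (by omega) (by omega)]
          have := q_pos (m + 1) (n - 1 - m) (by omega) (by omega)
          omega
        omega
      have h3 : 2 ≤ q m (n - 2) := by
        rw [R m (n - 2) (by omega) (by omega)]
        have a1 : 1 ≤ q (m + 1) (n - 2) := q_pos (m + 1) (n - 2) (by omega) (by omega)
        have a2 : 1 ≤ q m (n - 2 - m) := by
          rw [R m (n - 2 - m) (by omega) (by omega),
            qcong m (show n - 2 - m - m = 0 by omega), E0]
          omega
        omega
      omega
termination_by (n, n - m)
decreasing_by
  · left; omega
  · right; omega

lemma H1 (n : ℕ) (hn : 7 ≤ n) : 2 * q 2 n ≤ q 1 (n - 1) := by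
  by_cases h9 : 9 ≤ n
  · have e1 : q 2 n = q 2 (n - 2) + q 3 n := by
      rw [R 2 n (by omega) (by omega)]
    have ih : 2 * q 2 (n - 2) ≤ q 1 (n - 2 - 1) := H1 (n - 2) (by omega)
    have ih' : 2 * q 2 (n - 2) ≤ q 1 (n - 3) := by
      rwa [qcong 1 (show n - 2 - 1 = n - 3 by omega)] at ih
    have hm : 2 * q 3 n ≤ ∑ j ∈ Finset.range 2, q 2 (n - 1 - j) :=
      Hmain n 2 (by omega) (by omega)
    have hsum : ∑ j ∈ Finset.range 2, q 2 (n - 1 - j) = q 2 (n - 1) + q 2 (n - 2) := by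
      rw [Finset.sum_range_succ, Finset.sum_range_succ, Finset.sum_range_zero,
        qcong 2 (show n - 1 - 0 = n - 1 by omega), qcong 2 (show n - 1 - 1 = n - 2 by omega)]
      omega
    rw [hsum] at hm
    have e2 : q 1 (n - 1) = q 1 (n - 2) + q 2 (n - 1) := by
      rw [R 1 (n - 1) le_rfl (by omega), qcong 1 (show n - 1 - 1 = n - 2 by omega)]
    have e3 : q 1 (n - 2) = q 1 (n - 3) + q 2 (n - 2) := by
      rw [R 1 (n - 2) le_rfl (by omega), qcong 1 (show n - 2 - 1 = n - 3 by omega)]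
    omega
  · interval_cases n <;> norm_num [R, E0, E1]
termination_by n

theorem keyineq (n : ℕ) (hn : 7 ≤ n) : 2 * p n ≤ 3 * p (n - 1) := by
  have h1 := H1 n hn
  have e : q 1 n = q 1 (n - 1) + q 2 n := by
    rw [R 1 n le_rfl (by omega), qcong 1 (show n - 1 = n - 1 by omega)]
  rw [p_eq, p_eq]
  omega

theorem stmt10 (a : ℕ) (ha : 3 < a) :
    p a * p 2 ≤ p (a - 1) * p 3 ↔ a = 5 ∨ 7 ≤ a := by
  have hp2 : p 2 = 2 := by rw [p_eq]; norm_num [R, E0, E1]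
  have hp3 : p 3 = 3 := by rw [p_eq]; norm_num [R, E0, E1]
  have hp4 : p 4 = 5 := by rw [p_eq]; norm_num [R, E0, E1]
  have hp5 : p 5 = 7 := by rw [p_eq]; norm_num [R, E0, E1]
  have hp6 : p 6 = 11 := by rw [p_eq]; norm_num [R, E0, E1]
  constructor
  · intro h
    by_contra hcon
    push_neg at hcon
    obtain ⟨h5, h7⟩ := hcon
    have h4 : a = 4 ∨ a = 6 := by omega
    rcases h4 with rfl | rfl
    · rw [show (4:ℕ) - 1 = 3 by norm_num, hp4, hp2, hp3] at h
      omega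
    · rw [show (6:ℕ) - 1 = 5 by norm_num, hp6, hp2, hp5, hp3] at h
      omega
  · rintro (rfl | h7)
    · rw [show (5:ℕ) - 1 = 4 by norm_num, hp5, hp2, hp4, hp3]
      omega
    · have hk := keyineq a h7
      rw [hp2, hp3]
      omega
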